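/- For integers 0 ≤ i ≤ j+2, the path matching polynomials satisfy p_{i-1}(x)·p_{j+1}(x) − p_i(x)·p_j(x) = (−1)^{i-1} · x^i · p_{j−i}(x). -/

import Mathlib

open Polynomial LaurentPolynomial

/-- Matching generating polynomial of the path on `k` vertices, via its recurrence. -/
noncomputable def ppoly : ℕ → Polynomial ℚ
  | 0 => 1
  | 1 => 1
  | (k+2) => ppoly (k+1) + Polynomial.X * ppoly k

/-- Extension of `ppoly` to integer indices, with `p_{-1} = 0` (and `0` below that). -/
noncomputable def pz (k : ℤ) : Polynomial ℚ := if 0 ≤ k then ppoly k.toNat else 0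

/-- The path matching polynomials extended to integer indices as Laurent polynomials,
with the conventions `p_{-1} = 0` and `p_{-2} = 1/x`. -/
noncomputable def pL (k : ℤ) : LaurentPolynomial ℚ :=
  if k = -2 then LaurentPolynomial.T (-1)
  else if k < 0 then 0
  else Polynomial.toLaurent (ppoly k.toNat)

/-!
A recurrence `u (k+2) = u (k+1) + c u k` turns the cross difference
`u (i-1) u (j+1) - u i u j` into `-c` times the same difference with both indices lowered
by one. Iterating `i` times reduces to `i = 0`, where `p_{-1} = 0` and `p_0 = 1` leave `-p_{j-i}`;
the convention `p_{-2} = 1/x` is exactly what keeps the recurrence valid from `k = -2` on,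
which the case `i = j + 2` needs.
-/

section CrossDifference

variable {R : Type*} [CommRing R] (u : ℤ → R) (c : R) (m : ℤ)

theorem cross_sub_succ (hrec : ∀ k ≥ m, u (k + 2) = u (k + 1) + c * u k)
    (i j : ℤ) (hi : m ≤ i - 1) (hj : m ≤ j - 1) :
    u i * u (j + 1) - u (i + 1) * u j = -c * (u (i - 1) * u j - u i * u (j - 1)) := by
  have hu_i := hrec (i - 1) hi
  have hu_j := hrec (j - 1) hj
  rw [sub_add_cancel, show i - 1 + 2 = i + 1 by ring] at hu_i
  rw [sub_add_cancel, show j - 1 + 2 = j + 1 by ring] at hu_j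
  rw [hu_i, hu_j]
  ring

theorem cross_sub_eq_pow_mul (hrec : ∀ k ≥ m, u (k + 2) = u (k + 1) + c * u k)
    (hm : m ≤ -1) (i : ℕ) (j : ℤ) (hij : m ≤ j - i) :
    u (i - 1) * u (j + 1) - u i * u j =
      (-c) ^ i * (u (-1) * u (j - i + 1) - u 0 * u (j - i)) := by
  induction i generalizing j with
  | zero => simp
  | succ i ih =>
    push_cast at hij ⊢
    have ih' := ih (j - 1) (by omega)
    rw [sub_add_cancel] at ih'
    rw [add_sub_cancel_right, cross_sub_succ u c m hrec i j (by omega) (by omega), ih',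
      show j - (i + 1) = j - 1 - i by ring, pow_succ]
    ring

end CrossDifference

theorem pL_neg_two : pL (-2) = T (-1) := by simp [pL]

theorem pL_neg_one : pL (-1) = 0 := by simp [pL]

theorem pL_natCast (n : ℕ) : pL n = toLaurent (ppoly n) := by simp [pL]

theorem pL_zero : pL 0 = 1 := by simpa [ppoly] using pL_natCast 0

theorem pL_one : pL 1 = 1 := by simpa [ppoly] using pL_natCast 1

theorem pL_add_two (k : ℤ) (hk : -2 ≤ k) : pL (k + 2) = pL (k + 1) + T 1 * pL k := by
  obtain rfl | rfl | hk₀ : k = -2 ∨ k = -1 ∨ 0 ≤ k := by omega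
  · rw [pL_neg_two, ← T_add]
    simp [pL_zero, pL_neg_one]
  · simp [pL_one, pL_zero, pL_neg_one]
  · lift k to ℕ using hk₀ with n
    have h := congrArg toLaurent (show ppoly (n + 2) = ppoly (n + 1) + X * ppoly n from rfl)
    simpa [← pL_natCast, toLaurent_X] using h

/-- For integers `0 ≤ i ≤ j+2`:
`p_{i-1} p_{j+1} − p_i p_j = (−1)^{i-1} x^i p_{j−i}`. -/
theorem pL_product_identity (i : ℕ) (j : ℤ) (hij : (i : ℤ) ≤ j + 2) :
    pL ((i : ℤ) - 1) * pL (j + 1) - pL i * pL j =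
      (-1) ^ (i + 1) * LaurentPolynomial.T (i : ℤ) * pL (j - i) := by
  rw [cross_sub_eq_pow_mul pL (T 1) (-2) pL_add_two (by norm_num) i j (by omega),
    pL_neg_one, pL_zero, neg_pow, T_pow, mul_one, pow_succ]
  ring
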